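/- arXiv:0805.3038 — 4 statements merged into one kernel-verified Lean document; each statement's English description precedes it below -/
import Mathlib

section
/- Let Λ be a free abelian group of finite rank, X a proper positive subset of Λ (X ≠ Λ), Γ an Archimedean linearly ordered abelian group, and φ : Λ → Γ a group homomorphism. Write X⁺ = X \ (−X), Pos(φ) = {λ : φ(λ) ≥ 0}, and Pos⁺(φ) = {λ : φ(λ) > 0}. Then the following are equivalent: (1) X ⊆ Pos(φ); (2) X⁺ ⊆ Pos(φ); (3) Pos⁺(φ) ⊆ X⁺; (4) Pos⁺(φ) ⊆ X. -/
open Pointwise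

def IsPositiveSubset {Λ : Type*} [AddCommGroup Λ] (X : Set Λ) : Prop :=
  X ∪ (-X) = Set.univ ∧ X + X ⊆ X ∧ ∃ H : AddSubgroup Λ, (H : Set Λ) = X ∩ (-X)

/-! Conditions (2) and (4) each bound `φ` from below on the subgroup `X ∩ -X`, by `φ l₀` for any
`l₀ ∉ X`: for `h ∈ X ∩ -X` we have `-l₀ + h ∈ X⁺`, resp. `l₀ - h ∉ X`. A subgroup of an Archimedean
group that is bounded below is trivial, so `φ` vanishes on `X ∩ -X`, and `X = X⁺ ∪ (X ∩ -X)` then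
yields (1). -/

theorem AddSubgroup.eq_bot_of_bddBelow {Γ : Type*} [AddCommGroup Γ] [LinearOrder Γ]
    [IsOrderedAddMonoid Γ] [Archimedean Γ] (K : AddSubgroup Γ) (hK : BddBelow (K : Set Γ)) :
    K = ⊥ := by
  obtain ⟨a, ha⟩ := hK
  have nonneg : ∀ k ∈ K, 0 ≤ k := by
    intro k hk
    by_contra! hneg
    obtain ⟨n, hn⟩ := Archimedean.arch (-a + -k) (neg_pos.2 hneg)
    rw [smul_neg, ← neg_add, neg_le_neg_iff] at hn
    exact hneg.not_ge (le_add_iff_nonneg_right a |>.1 ((ha (K.nsmul_mem hk n)).trans hn))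
  refine (AddSubgroup.eq_bot_iff_forall K).2 fun k hk ↦ ?_
  exact le_antisymm (neg_nonneg.1 (nonneg _ (K.neg_mem hk))) (nonneg k hk)

namespace IsPositiveSubset

variable {Λ : Type*} [AddCommGroup Λ] {X : Set Λ}

theorem mem_or_neg_mem (hX : IsPositiveSubset X) (l : Λ) : l ∈ X ∨ -l ∈ X :=
  Set.eq_univ_iff_forall.1 hX.1 l

theorem add_mem (hX : IsPositiveSubset X) {a b : Λ} (ha : a ∈ X) (hb : b ∈ X) : a + b ∈ X :=
  hX.2.1 (Set.add_mem_add ha hb)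

theorem neg_mem_diff_of_notMem (hX : IsPositiveSubset X) {l : Λ} (hl : l ∉ X) :
    -l ∈ X \ -X :=
  ⟨(hX.mem_or_neg_mem l).resolve_left hl, by simpa using hl⟩

theorem add_notMem (hX : IsPositiveSubset X) {l h : Λ} (hl : l ∉ X) (hh : h ∈ -X) :
    l + h ∉ X := fun hlh ↦ hl (by simpa using hX.add_mem hlh hh)

theorem add_mem_diff (hX : IsPositiveSubset X) {x h : Λ} (hx : x ∈ X \ -X) (hh : h ∈ X ∩ -X) :
    x + h ∈ X \ -X := by
  refine ⟨hX.add_mem hx.1 hh.1, fun hxh ↦ hX.add_notMem hx.2 (Set.neg_mem_neg.2 hh.1) ?_⟩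
  simpa [add_comm] using hxh

variable {Γ : Type*} [AddCommGroup Γ] [LinearOrder Γ] [IsOrderedAddMonoid Γ]

theorem map_eq_zero_of_forall_le [Archimedean Γ] (hX : IsPositiveSubset X) (φ : Λ →+ Γ)
    {a : Γ} (ha : ∀ h ∈ X ∩ -X, a ≤ φ h) {h : Λ} (hh : h ∈ X ∩ -X) : φ h = 0 := by
  obtain ⟨-, -, H, hH⟩ := hX
  rw [← hH] at ha hh
  have hbot : H.map φ = ⊥ :=
    (H.map φ).eq_bot_of_bddBelow ⟨a, by rintro _ ⟨h, hh, rfl⟩; exact ha h hh⟩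
  exact (AddSubgroup.map_eq_bot_iff H).1 hbot hh

theorem map_eq_zero_of_diff_subset [Archimedean Γ] (hX : IsPositiveSubset X)
    (hproper : X ≠ Set.univ) {φ : Λ →+ Γ} (h2 : X \ -X ⊆ {l | 0 ≤ φ l}) {h : Λ}
    (hh : h ∈ X ∩ -X) : φ h = 0 := by
  obtain ⟨l, hl⟩ := (Set.ne_univ_iff_exists_notMem X).1 hproper
  refine hX.map_eq_zero_of_forall_le φ (a := φ l) (fun k hk ↦ ?_) hh
  have := h2 (hX.add_mem_diff (hX.neg_mem_diff_of_notMem hl) hk)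
  rwa [Set.mem_ofPred_eq, map_add, map_neg, neg_add_eq_sub, sub_nonneg] at this

theorem map_eq_zero_of_pos_subset [Archimedean Γ] (hX : IsPositiveSubset X)
    (hproper : X ≠ Set.univ) {φ : Λ →+ Γ} (h4 : {l | 0 < φ l} ⊆ X) {h : Λ}
    (hh : h ∈ X ∩ -X) : φ h = 0 := by
  obtain ⟨l, hl⟩ := (Set.ne_univ_iff_exists_notMem X).1 hproper
  refine hX.map_eq_zero_of_forall_le φ (a := φ l) (fun k hk ↦ ?_) hh
  have := mt (@h4 _) (hX.add_notMem hl (Set.neg_mem_neg.2 hk.1))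
  rwa [Set.mem_ofPred_eq, map_add, map_neg, ← sub_eq_add_neg, not_lt, sub_nonpos] at this

theorem subset_nonneg_of_diff_subset [Archimedean Γ] (hX : IsPositiveSubset X)
    (hproper : X ≠ Set.univ) {φ : Λ →+ Γ} (h2 : X \ -X ⊆ {l | 0 ≤ φ l}) :
    X ⊆ {l | 0 ≤ φ l} := by
  intro x hx
  by_cases hx' : x ∈ -X
  · exact (hX.map_eq_zero_of_diff_subset hproper h2 ⟨hx, hx'⟩).ge
  · exact h2 ⟨hx, hx'⟩

theorem subset_nonneg_of_pos_subset [Archimedean Γ] (hX : IsPositiveSubset X)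
    (hproper : X ≠ Set.univ) {φ : Λ →+ Γ} (h4 : {l | 0 < φ l} ⊆ X) :
    X ⊆ {l | 0 ≤ φ l} := by
  intro x hx
  by_contra hx₀
  have hneg : φ x < 0 := not_le.1 hx₀
  have hx' : x ∈ -X := h4 (show 0 < φ (-x) by simpa using hneg)
  exact hneg.ne (hX.map_eq_zero_of_pos_subset hproper h4 ⟨hx, hx'⟩)

theorem pos_subset_diff_of_subset_nonneg (hX : IsPositiveSubset X) {φ : Λ →+ Γ}
    (h1 : X ⊆ {l | 0 ≤ φ l}) : {l | 0 < φ l} ⊆ X \ -X := by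
  intro l hl
  have hl' : -l ∉ X := fun h ↦ (h1 h).not_gt (by simpa using hl)
  simpa using hX.neg_mem_diff_of_notMem hl'

end IsPositiveSubset

theorem tfae_separating_general {Λ Γ : Type*} [AddCommGroup Λ]
    [AddCommGroup Γ] [LinearOrder Γ] [IsOrderedAddMonoid Γ] [Archimedean Γ]
    (X : Set Λ) (hX : IsPositiveSubset X) (hXproper : X ≠ Set.univ)
    (φ : Λ →+ Γ) :
    [X ⊆ {l : Λ | 0 ≤ φ l},
     X \ (-X) ⊆ {l : Λ | 0 ≤ φ l},
     {l : Λ | 0 < φ l} ⊆ X \ (-X),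
     {l : Λ | 0 < φ l} ⊆ X].TFAE := by
  tfae_have 1 → 2 := fun h1 _ hl ↦ h1 hl.1
  tfae_have 2 → 1 := hX.subset_nonneg_of_diff_subset hXproper
  tfae_have 1 → 3 := hX.pos_subset_diff_of_subset_nonneg
  tfae_have 3 → 4 := fun h3 _ hl ↦ (h3 hl).1
  tfae_have 4 → 1 := hX.subset_nonneg_of_pos_subset hXproper
  tfae_finish

theorem tfae_separating {Λ Γ : Type*} [AddCommGroup Λ]
    [Module.Free ℤ Λ] [Module.Finite ℤ Λ]
    [AddCommGroup Γ] [LinearOrder Γ] [IsOrderedAddMonoid Γ] [Archimedean Γ]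
    (X : Set Λ) (hX : IsPositiveSubset X) (hXproper : X ≠ Set.univ)
    (φ : Λ →+ Γ) :
    [X ⊆ {l : Λ | 0 ≤ φ l},
     X \ (-X) ⊆ {l : Λ | 0 ≤ φ l},
     {l : Λ | 0 < φ l} ⊆ X \ (-X),
     {l : Λ | 0 < φ l} ⊆ X].TFAE :=
  tfae_separating_general X hX hXproper φ
end

section
/- Let Λ be a free abelian group of finite rank, λ₁, …, λ_n ∈ Λ, and suppose there exist strictly positive real numbers t₁, …, t_n with t₁·λ₁ + ⋯ + t_n·λ_n = 0 in ℝ ⊗_ℤ Λ. Then there exist positive integers r₁, …, r_n with r₁·λ₁ + ⋯ + r_n·λ_n = 0 in Λ. -/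
/-!
Since `ℝ` is flat over `ℤ`, the real solutions `x` of `∑ xᵢ λᵢ = 0` form the real span of the
integer solutions, so `t = ∑ₖ cₖ wₖ` with integer solutions `wₖ`. The coefficient vectors `c` for
which `∑ₖ cₖ wₖ` is strictly positive form a nonempty open cone, and such a cone contains an
integer point (round a large multiple of any of its points); the corresponding integer
combination of the `wₖ` is the required positive integer solution.
-/

open TensorProduct

theorem mem_span_algebraMap_ker_linearCombination {R S M ι : Type*} [CommRing R] [CommRing S]
    [Algebra R S] [Module.Flat R S] [AddCommGroup M] [Module R M] [Fintype ι] [DecidableEq ι]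
    (l : ι → M) (t : ι → S) (ht : ∑ i, t i • ((1 : S) ⊗ₜ[R] l i) = 0) :
    t ∈ Submodule.span S
      ((algebraMap R S ∘ ·) '' LinearMap.ker (Fintype.linearCombination R l)) := by
  set f := Fintype.linearCombination R l
  set e := piScalarRight R S S ι
  have hker : e.symm t ∈ LinearMap.ker (AlgebraTensorModule.lTensor S S f) := by
    rw [LinearMap.mem_ker, ← ht, ← Finset.univ_sum_single t]
    simp [e, f, Fintype.linearCombination_apply, Pi.single_apply, smul_tmul']
  rw [Module.Flat.ker_lTensor_eq] at hker
  obtain ⟨y, hy⟩ := hker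
  rw [← e.apply_symm_apply t, ← hy]
  clear hy
  induction y using TensorProduct.induction_on with
  | zero => simp
  | tmul s v =>
    have hsv : e (AlgebraTensorModule.lTensor S S f.ker.subtype (s ⊗ₜ v)) =
        s • (algebraMap R S ∘ v.1) := by
      ext i
      simp [e, Algebra.smul_def, mul_comm]
    rw [hsv]
    exact Submodule.smul_mem _ s (Submodule.subset_span ⟨v.1, v.2, rfl⟩)
  | add y z hy hz => rw [map_add, map_add]; exact Submodule.add_mem _ hy hz

theorem exists_intCast_mem_of_isOpen_of_smul_mem {ι : Type*} [Fintype ι] {U : Set (ι → ℝ)}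
    (hU : IsOpen U) (hne : U.Nonempty) (hsmul : ∀ c : ℝ, 0 < c → ∀ x ∈ U, c • x ∈ U) :
    ∃ z : ι → ℤ, (Int.cast ∘ z : ι → ℝ) ∈ U := by
  obtain ⟨x, hx⟩ := hne
  obtain ⟨δ, hδ, hball⟩ := Metric.isOpen_iff.mp hU x hx
  obtain ⟨N, hN⟩ := exists_nat_gt δ⁻¹
  have hNpos : (0 : ℝ) < N := (inv_pos.mpr hδ).trans hN
  set z : ι → ℤ := fun i => round (N * x i)
  refine ⟨z, ?_⟩
  have hnear : (N : ℝ)⁻¹ • (Int.cast ∘ z : ι → ℝ) ∈ Metric.ball x δ := by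
    rw [Metric.mem_ball, dist_pi_lt_iff hδ]
    intro i
    have hround := abs_sub_round ((N : ℝ) * x i)
    have hδN : (N : ℝ)⁻¹ < δ := by rwa [inv_lt_comm₀ hNpos hδ]
    have hdiff : (N : ℝ)⁻¹ * z i - x i = -((N : ℝ)⁻¹ * (N * x i - z i)) := by
      field_simp
      ring
    calc dist ((N : ℝ)⁻¹ * z i) (x i) = (N : ℝ)⁻¹ * |N * x i - z i| := by
          rw [Real.dist_eq, hdiff, abs_neg, abs_mul, abs_of_pos (inv_pos.mpr hNpos)]
      _ ≤ (N : ℝ)⁻¹ * (1 / 2) := by gcongr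
      _ < δ := by linarith [inv_pos.mpr hNpos]
  simpa [smul_smul, hNpos.ne'] using hsmul N hNpos _ (hball hnear)

theorem exists_forall_pos_mem_of_mem_span {ι : Type*} [Fintype ι] (K : Submodule ℤ (ι → ℤ))
    {t : ι → ℝ} (ht : t ∈ Submodule.span ℝ ((Int.cast ∘ ·) '' K)) (hpos : ∀ i, 0 < t i) :
    ∃ v ∈ K, ∀ i, 0 < v i := by
  obtain ⟨m, c, g, hcg⟩ := Submodule.mem_span_set'.mp ht
  choose w hwK hwg using fun k => (g k).2
  set G := Fintype.linearCombination ℝ (fun k => (g k : ι → ℝ))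
  set U := G ⁻¹' Set.univ.pi fun _ => Set.Ioi 0
  have hU : IsOpen U :=
    (isOpen_set_pi Set.finite_univ fun _ _ => isOpen_Ioi).preimage
      (LinearMap.continuous_of_finiteDimensional G)
  have hcU : c ∈ U := by
    simpa [U, G, Fintype.linearCombination_apply, hcg] using hpos
  have hsmul : ∀ a : ℝ, 0 < a → ∀ x ∈ U, a • x ∈ U := by
    intro a ha x hx
    simp only [U, Set.mem_preimage, Set.mem_univ_pi, Set.mem_Ioi, map_smul, Pi.smul_apply,
      smul_eq_mul] at hx ⊢
    exact fun i => mul_pos ha (hx i)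
  obtain ⟨z, hz⟩ := exists_intCast_mem_of_isOpen_of_smul_mem hU ⟨c, hcU⟩ hsmul
  refine ⟨∑ k, z k • w k, Submodule.sum_mem _ fun k _ => Submodule.smul_mem _ _ (hwK k), ?_⟩
  intro i
  have hzi : (0 : ℝ) < ∑ k, (z k : ℝ) * w k i := by
    simpa [U, G, Fintype.linearCombination_apply, ← hwg, Finset.sum_apply] using hz i
  simpa [Finset.sum_apply] using (by exact_mod_cast hzi : (0 : ℤ) < ∑ k, z k * w k i)

theorem rational_solutions_general {Λ : Type*} [AddCommGroup Λ]
    (n : ℕ) (l : Fin n → Λ) (t : Fin n → ℝ) (ht : ∀ i, 0 < t i)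
    (h : ∑ i, t i • ((1 : ℝ) ⊗ₜ[ℤ] l i : ℝ ⊗[ℤ] Λ) = 0) :
    ∃ r : Fin n → ℕ, (∀ i, 0 < r i) ∧ ∑ i, (r i : ℤ) • l i = 0 := by
  have hspan := mem_span_algebraMap_ker_linearCombination l t h
  rw [algebraMap_int_eq, Int.coe_castRingHom] at hspan
  obtain ⟨v, hvK, hv⟩ := exists_forall_pos_mem_of_mem_span _ hspan ht
  refine ⟨fun i => (v i).toNat, fun i => by simpa using hv i, ?_⟩
  simpa [Int.toNat_of_nonneg (hv _).le, Fintype.linearCombination_apply] using hvK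

theorem rational_solutions {Λ : Type*} [AddCommGroup Λ]
    [Module.Free ℤ Λ] [Module.Finite ℤ Λ]
    (n : ℕ) (l : Fin n → Λ) (t : Fin n → ℝ) (ht : ∀ i, 0 < t i)
    (h : ∑ i, t i • ((1 : ℝ) ⊗ₜ[ℤ] l i : ℝ ⊗[ℤ] Λ) = 0) :
    ∃ r : Fin n → ℕ, (∀ i, 0 < r i) ∧ ∑ i, (r i : ℤ) • l i = 0 :=
  rational_solutions_general n l t ht h
end

section
/- Let Λ be a free abelian group of finite rank, φ a nonzero linear form on V = ℝ ⊗_ℤ Λ, and let K = (ker φ) ∩ Λ. Then the map sending a positive subset X of K to X ∪ Pos⁺(φ) (where Pos⁺(φ) = {λ ∈ Λ : φ(λ) > 0}) is a bijection from the set of positive subsets of K onto the set of positive subsets Y of Λ satisfying Y ⊆ Pos(φ); its inverse sends Y to Y ∩ K. -/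
/-!
Since `φ` is non-negative on `Y` and `Y ∪ -Y` is everything, `Y` contains every `l` with
`φ l > 0`, and `Y ∩ -Y` lies in the kernel. So `Y` is determined by its trace on `K`. Conversely,
gluing a positive subset of `K` onto the open half-space `{φ > 0}` gives a positive set, because
the half-space absorbs every sum having one summand in it.
-/

open Pointwise
open scoped TensorProduct

theorem AddMonoidHom.preimage_neg {M Λ : Type*} [AddGroup M] [AddGroup Λ] (g : M →+ Λ)
    (Y : Set Λ) : g ⁻¹' (-Y) = -(g ⁻¹' Y) := by
  ext m
  simp

theorem IsPositiveSubset.preimage {M Λ : Type*} [AddCommGroup M] [AddCommGroup Λ] {Y : Set Λ}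
    (hY : IsPositiveSubset Y) (g : M →+ Λ) : IsPositiveSubset (g ⁻¹' Y) := by
  obtain ⟨hcover, hadd, H, hH⟩ := hY
  refine ⟨?_, ?_, H.comap g, ?_⟩
  · rw [← g.preimage_neg, ← Set.preimage_union, hcover, Set.preimage_univ]
  · rw [← Set.image_subset_iff, Set.image_add]
    exact (Set.add_subset_add (Set.image_preimage_subset g Y)
      (Set.image_preimage_subset g Y)).trans hadd
  · rw [AddSubgroup.coe_comap, hH, Set.preimage_inter, g.preimage_neg]

section HalfSpace

variable {Λ G : Type*} [AddCommGroup Λ] [AddCommGroup G] [LinearOrder G] (f : Λ →+ G)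

theorem preimage_val_image_val_union_pos (X : Set f.ker) :
    Subtype.val ⁻¹' (Subtype.val '' X ∪ {l | 0 < f l}) = X := by
  rw [Set.preimage_union, Set.preimage_image_eq _ Subtype.val_injective, Set.union_eq_left]
  intro k hk
  exact absurd (f.mem_ker.mp k.2) (ne_of_gt hk)

theorem image_val_union_pos_subset_nonneg (X : Set f.ker) :
    Subtype.val '' X ∪ {l | 0 < f l} ⊆ {l | 0 ≤ f l} := by
  rintro l (⟨k, -, rfl⟩ | hl)
  · exact (f.mem_ker.mp k.2).ge
  · exact le_of_lt hl

variable [IsOrderedAddMonoid G]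

theorem inter_neg_subset_ker {Y : Set Λ} (hY : Y ⊆ {l | 0 ≤ f l}) : Y ∩ -Y ⊆ f.ker := by
  rintro l ⟨hl, hnl⟩
  have hneg : 0 ≤ -f l := by simpa using hY hnl
  exact f.mem_ker.mpr (le_antisymm (neg_nonneg.mp hneg) (hY hl))

theorem IsPositiveSubset.pos_subset {Y : Set Λ} (hY : IsPositiveSubset Y)
    (hYf : Y ⊆ {l | 0 ≤ f l}) : {l | 0 < f l} ⊆ Y := by
  intro l hl
  rcases (hY.1.symm ▸ Set.mem_univ l : l ∈ Y ∪ -Y) with h | h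
  · exact h
  · have hneg : 0 ≤ -f l := by simpa using hYf h
    exact absurd hl (not_lt.mpr (neg_nonneg.mp hneg))

theorem IsPositiveSubset.image_val_union_pos {X : Set f.ker} (hX : IsPositiveSubset X) :
    IsPositiveSubset (Subtype.val '' X ∪ {l | 0 < f l}) := by
  obtain ⟨hcover, hadd, H, hH⟩ := hX
  set Y := Subtype.val '' X ∪ {l | 0 < f l}
  refine ⟨Set.eq_univ_of_forall fun l => ?_, ?_, H.map f.ker.subtype, ?_⟩
  · rcases lt_trichotomy (f l) 0 with h | h | h
    · right; right
      show 0 < f (-l)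
      rw [map_neg]
      exact neg_pos.mpr h
    · rcases (hcover.symm ▸ Set.mem_univ _ : (⟨l, h⟩ : f.ker) ∈ X ∪ -X) with hx | hx
      · exact Or.inl (Or.inl ⟨_, hx, rfl⟩)
      · exact Or.inr (Or.inl ⟨_, hx, rfl⟩)
    · exact Or.inl (Or.inr h)
  · rintro _ ⟨a, ha, b, hb, rfl⟩
    rcases ha with ⟨a, ha, rfl⟩ | ha <;> rcases hb with ⟨b, hb, rfl⟩ | hb
    · exact Or.inl ⟨a + b, hadd (Set.add_mem_add ha hb), rfl⟩
    · right
      show 0 < f (a + b)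
      rwa [map_add, f.mem_ker.mp a.2, zero_add]
    · right
      show 0 < f (a + b)
      rwa [map_add, f.mem_ker.mp b.2, add_zero]
    · right
      show 0 < f (a + b)
      rw [map_add]
      exact add_pos ha hb
  · calc (H.map f.ker.subtype : Set Λ) = Subtype.val '' (X ∩ -X) := by
          rw [AddSubgroup.coe_map, hH]; rfl
      _ = Subtype.val '' (Subtype.val ⁻¹' (Y ∩ -Y)) := by
          rw [Set.preimage_inter, ← preimage_val_image_val_union_pos f X]
          rfl
      _ = Y ∩ -Y := by
          refine Set.image_preimage_eq_of_subset ?_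
          rw [Subtype.range_coe]
          exact inter_neg_subset_ker f (image_val_union_pos_subset_nonneg f X)

theorem image_val_preimage_val_union_pos {Y : Set Λ} (hY : IsPositiveSubset Y)
    (hYf : Y ⊆ {l | 0 ≤ f l}) :
    Subtype.val '' (Subtype.val ⁻¹' Y : Set f.ker) ∪ {l | 0 < f l} = Y := by
  ext l
  constructor
  · rintro (⟨k, hk, rfl⟩ | hl)
    exacts [hk, hY.pos_subset f hYf hl]
  · intro hl
    rcases (hYf hl).eq_or_lt with h | h
    exacts [Or.inl ⟨⟨l, f.mem_ker.mpr h.symm⟩, hl, rfl⟩, Or.inr h]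

theorem bijOn_image_val_union_pos :
    Set.BijOn (fun X : Set f.ker => Subtype.val '' X ∪ {l | 0 < f l})
      {X | IsPositiveSubset X} {Y | IsPositiveSubset Y ∧ Y ⊆ {l | 0 ≤ f l}} ∧
    Set.InvOn (fun Y : Set Λ => (Subtype.val ⁻¹' Y : Set f.ker))
      (fun X : Set f.ker => Subtype.val '' X ∪ {l | 0 < f l})
      {X | IsPositiveSubset X} {Y | IsPositiveSubset Y ∧ Y ⊆ {l | 0 ≤ f l}} := by
  have hinv : Set.InvOn (fun Y : Set Λ => (Subtype.val ⁻¹' Y : Set f.ker))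
      (fun X : Set f.ker => Subtype.val '' X ∪ {l | 0 < f l})
      {X | IsPositiveSubset X} {Y | IsPositiveSubset Y ∧ Y ⊆ {l | 0 ≤ f l}} :=
    ⟨fun X _ => preimage_val_image_val_union_pos f X,
      fun _ hY => image_val_preimage_val_union_pos f hY.1 hY.2⟩
  have hmaps : Set.MapsTo (fun X : Set f.ker => Subtype.val '' X ∪ {l | 0 < f l})
      {X | IsPositiveSubset X} {Y | IsPositiveSubset Y ∧ Y ⊆ {l | 0 ≤ f l}} :=
    fun X hX => ⟨hX.image_val_union_pos f, image_val_union_pos_subset_nonneg f X⟩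
  exact ⟨hinv.bijOn hmaps fun _ hY => hY.1.preimage f.ker.subtype, hinv⟩

end HalfSpace

theorem fiber_bijection_general {Λ : Type*} [AddCommGroup Λ]
    (φ : (ℝ ⊗[ℤ] Λ) →ₗ[ℝ] ℝ)
    (K : AddSubgroup Λ) (hK : ∀ l : Λ, l ∈ K ↔ φ ((1 : ℝ) ⊗ₜ[ℤ] l) = 0) :
    Set.BijOn
      (fun X : Set K => (Subtype.val '' X) ∪ {l : Λ | 0 < φ ((1 : ℝ) ⊗ₜ[ℤ] l)})
      {X : Set K | IsPositiveSubset X}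
      {Y : Set Λ | IsPositiveSubset Y ∧ Y ⊆ {l : Λ | 0 ≤ φ ((1 : ℝ) ⊗ₜ[ℤ] l)}} ∧
    Set.InvOn (fun Y : Set Λ => (Subtype.val ⁻¹' Y : Set K))
      (fun X : Set K => (Subtype.val '' X) ∪ {l : Λ | 0 < φ ((1 : ℝ) ⊗ₜ[ℤ] l)})
      {X : Set K | IsPositiveSubset X}
      {Y : Set Λ | IsPositiveSubset Y ∧ Y ⊆ {l : Λ | 0 ≤ φ ((1 : ℝ) ⊗ₜ[ℤ] l)}} := by
  let f : Λ →+ ℝ := (φ.restrictScalars ℤ ∘ₗ TensorProduct.mk ℤ ℝ Λ 1).toAddMonoidHom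
  obtain rfl : K = f.ker := AddSubgroup.ext fun l => (hK l).trans f.mem_ker.symm
  exact bijOn_image_val_union_pos f

theorem fiber_bijection {Λ : Type*} [AddCommGroup Λ]
    [Module.Free ℤ Λ] [Module.Finite ℤ Λ]
    (φ : (ℝ ⊗[ℤ] Λ) →ₗ[ℝ] ℝ) (hφ : φ ≠ 0)
    (K : AddSubgroup Λ) (hK : ∀ l : Λ, l ∈ K ↔ φ ((1 : ℝ) ⊗ₜ[ℤ] l) = 0) :
    Set.BijOn
      (fun X : Set K => (Subtype.val '' X) ∪ {l : Λ | 0 < φ ((1 : ℝ) ⊗ₜ[ℤ] l)})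
      {X : Set K | IsPositiveSubset X}
      {Y : Set Λ | IsPositiveSubset Y ∧ Y ⊆ {l : Λ | 0 ≤ φ ((1 : ℝ) ⊗ₜ[ℤ] l)}} ∧
    Set.InvOn (fun Y : Set Λ => (Subtype.val ⁻¹' Y : Set K))
      (fun X : Set K => (Subtype.val '' X) ∪ {l : Λ | 0 < φ ((1 : ℝ) ⊗ₜ[ℤ] l)})
      {X : Set K | IsPositiveSubset X}
      {Y : Set Λ | IsPositiveSubset Y ∧ Y ⊆ {l : Λ | 0 ≤ φ ((1 : ℝ) ⊗ₜ[ℤ] l)}} :=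
  fiber_bijection_general φ K hK
end

section
/- The set Pos(ℤ) of positive subsets of the group ℤ has exactly three elements: ℤ itself, ℤ_{≥0}, and ℤ_{≤0}. -/
open Pointwise

/-!
A positive subset `X ⊆ ℤ` contains `0` and is closed under addition, so it contains `ℤ_{≥0}` as
soon as `1 ∈ X`. If moreover `-1 ∈ X`, then `1` lies in the subgroup `X ∩ -X`, which is then all
of `ℤ`; if `-1 ∉ X`, a negative `n ∈ X` is impossible since `n + (-n - 1) = -1`. If `1 ∉ X`, then
`1 ∈ -X`, and `-X` is positive as well.
-/

section General

variable {Λ : Type*} [AddCommGroup Λ]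

namespace IsPositiveSubset

variable {X : Set Λ}

theorem zero_mem (hX : IsPositiveSubset X) : (0 : Λ) ∈ X := by
  obtain ⟨-, -, H, hH⟩ := hX
  have h0 : (0 : Λ) ∈ (H : Set Λ) := H.zero_mem
  exact (hH ▸ h0).1

theorem neg_mem_of_notMem (hX : IsPositiveSubset X) {x : Λ} (hx : x ∉ X) : -x ∈ X := by
  have hx' : x ∈ X ∪ -X := hX.1 ▸ Set.mem_univ x
  exact hx'.resolve_left hx

theorem neg (hX : IsPositiveSubset X) : IsPositiveSubset (-X) := by
  obtain ⟨hunion, hadd, H, hH⟩ := hX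
  refine ⟨by rwa [neg_neg, Set.union_comm], ?_, H, by rw [neg_neg, Set.inter_comm, hH]⟩
  rw [← neg_add_rev]
  exact Set.neg_subset_neg.mpr hadd

end IsPositiveSubset

theorem isPositiveSubset_univ : IsPositiveSubset (Set.univ : Set Λ) :=
  ⟨by simp, by simp, ⊤, by simp⟩

variable [LinearOrder Λ] [IsOrderedAddMonoid Λ]

theorem isPositiveSubset_setOf_nonneg : IsPositiveSubset {x : Λ | 0 ≤ x} := by
  refine ⟨?_, ?_, ⊥, ?_⟩
  · ext x
    simp [le_total]
  · rintro _ ⟨a, ha, b, hb, rfl⟩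
    exact add_nonneg ha hb
  · ext x
    simp [le_antisymm_iff, and_comm]

theorem neg_setOf_nonneg : -{x : Λ | 0 ≤ x} = {x | x ≤ 0} := by
  ext x
  simp

end General

theorem Int.setOf_nonneg_subset_of_one_mem {X : Set ℤ} (hadd : X + X ⊆ X) (h0 : 0 ∈ X)
    (h1 : 1 ∈ X) : {n : ℤ | 0 ≤ n} ⊆ X := by
  intro n hn
  lift n to ℕ using hn
  induction n with
  | zero => exact h0
  | succ k ih =>
    push_cast
    exact hadd (Set.add_mem_add ih h1)

namespace IsPositiveSubset

theorem eq_univ_or_eq_setOf_nonneg_of_one_mem {X : Set ℤ} (hX : IsPositiveSubset X)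
    (h1 : 1 ∈ X) : X = Set.univ ∨ X = {n | 0 ≤ n} := by
  have hnonneg := Int.setOf_nonneg_subset_of_one_mem hX.2.1 hX.zero_mem h1
  by_cases hm1 : -1 ∈ X
  · left
    obtain ⟨-, -, H, hH⟩ := hX
    have h1H : (1 : ℤ) ∈ (H : Set ℤ) := hH ▸ ⟨h1, by simpa using hm1⟩
    refine Set.eq_univ_of_forall fun x => ?_
    have hx : x ∈ (H : Set ℤ) := by simpa using H.zsmul_mem h1H x
    exact (hH ▸ hx).1
  · right
    refine Set.Subset.antisymm (fun n hn => ?_) hnonneg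
    by_contra hneg
    apply hm1
    simp only [Set.mem_ofPred_eq, not_le] at hneg
    have hsum := hX.2.1 (Set.add_mem_add hn (hnonneg (show 0 ≤ -n - 1 by omega)))
    rwa [show n + (-n - 1) = -1 by ring] at hsum

end IsPositiveSubset

theorem positiveSubsets_int :
    {X : Set ℤ | IsPositiveSubset X} =
      {Set.univ, {n : ℤ | 0 ≤ n}, {n : ℤ | n ≤ 0}} := by
  ext X
  simp only [Set.mem_ofPred_eq, Set.mem_insert_iff, Set.mem_singleton_iff]
  constructor
  · intro hX
    by_cases h1 : (1 : ℤ) ∈ X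
    · rcases hX.eq_univ_or_eq_setOf_nonneg_of_one_mem h1 with h | h <;> simp [h]
    · have hm1 : (1 : ℤ) ∈ -X := by simpa using hX.neg_mem_of_notMem h1
      have hneg : -X ≠ Set.univ := fun h => h1 <| by
        simpa using (h ▸ Set.mem_univ (-1 : ℤ) : (-1 : ℤ) ∈ -X)
      have hX' := (hX.neg.eq_univ_or_eq_setOf_nonneg_of_one_mem hm1).resolve_left hneg
      right; right
      rw [← neg_neg X, hX', neg_setOf_nonneg]
  · rintro (rfl | rfl | rfl)
    · exact isPositiveSubset_univ
    · exact isPositiveSubset_setOf_nonneg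
    · exact neg_setOf_nonneg (Λ := ℤ) ▸ isPositiveSubset_setOf_nonneg.neg
end
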